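/- In the two-player lower-bound construction with parameters ε ∈ (0,1) and N a multiple of 3 with n = q = 2N/ε ∈ ℕ, suppose the encoding function Φ satisfies Condition 1 (minimum distance). Then for every γ ≥ 225, the offset DEC of the convexified instance satisfies decoreg_γ(co(J)) = sup_{M̄ ∈ co(M)} inf_{p ∈ Δ(Π)} sup_{M ∈ co(M)} E_{π∼p}[ Σ_{k=1,2}( max_{π'_k ∈ Π_k} f^M_k(π'_k, π_{−k}) − f^M_k(π) ) − γ·H²(M(π), M̄(π)) ] ≤ ε. -/

import Mathlib

open Finset
open scoped Classical BigOperators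

/-! ## The two-player zero-sum lower-bound construction

Parameters: `ε ∈ (0,1)`, `N` a multiple of `3`, `n = q = 2N/ε`.  Player 1's
decisions are `Π₁ = [2n]` (encoded as `Fin (2n)`, with index `i < n`
representing coordinate `i+1 ∈ [n]` and index `i ≥ n` representing coordinate
`i+1 ∈ [n+1, 2n]`), player 2's decisions are `Π₂ = {0, 1, …, 2q}` (encoded
as `Fin (2q+1)`, with `0` the safe action, values `1, …, q` the range of the
codewords for `𝒯₁`-models and `q+1, …, 2q` the range for `𝒯₂`-models).
An observation is a pair of a reward index `j ∈ Fin 3` (decoding to the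
deterministic zero-sum reward pairs `(0,0)`, `(1,−1)`, `(−δ, δ)` respectively,
where `δ = 10⁻³`) and a pure observation `o∘ ∈ [N]`.  The encoding function `Φ`
is represented by `Φ₁ Φ₂ : Finset (Fin N) → Fin n → Fin q`, where for
`T ∈ 𝒯₁` (i.e. `T.card = N/3`) the codeword is `i ↦ Φ₁ T i` (with second
coordinate encoded as `(Φ₁ T i) + 1 ∈ {1, …, q}`), and for `T ∈ 𝒯₂`
(i.e. `T.card = 2N/3`) the codeword is `n + i ↦ q + 1 + Φ₂ T i`. -/

section TwoPlayerLB

variable (N n q : ℕ)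

/-- The joint pure decision set `Π = Π₁ × Π₂`. -/
abbrev JointDec := Fin (2 * n) × Fin (2 * q + 1)

/-- The observation space: a reward index and a pure observation in `[N]`. -/
abbrev LBObs (N : ℕ) := Fin 3 × Fin N

/-- Player 1's reward decoded from the reward index (`δ = 10⁻³`). -/
noncomputable def rdecode : Fin 3 → ℝ := ![0, 1, -(1 / 1000)]

variable (Φ₁ Φ₂ : Finset (Fin N) → Fin n → Fin q)

/-- Membership `π ∈ B*(T)`. -/
def inBstar (T : Finset (Fin N)) (π : JointDec n q) : Prop :=
  if T.card = N / 3 then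
    ∃ i : Fin n, (π.1 : ℕ) = (i : ℕ) ∧ (π.2 : ℕ) = (Φ₁ T i : ℕ) + 1
  else
    ∃ i : Fin n, (π.1 : ℕ) = n + (i : ℕ) ∧ (π.2 : ℕ) = q + 1 + (Φ₂ T i : ℕ)

/-- The deterministic reward index of the model `M_T` at decision `π`:
rewards `(0,0)` if `π₂ = 0`, `(−δ, δ)` if `π ∈ B*(T)`, and `(1, −1)` otherwise. -/
noncomputable def ridxT (T : Finset (Fin N)) (π : JointDec n q) : Fin 3 :=
  if (π.2 : ℕ) = 0 then 0 else if inBstar N n q Φ₁ Φ₂ T π then 2 else 1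

/-- The reward index used by the models `M₀` and `M_{T,0}` (as if `B* = ∅`). -/
noncomputable def ridx0 (π : JointDec n q) : Fin 3 :=
  if (π.2 : ℕ) = 0 then 0 else 1

/-- The model `M_T`: deterministic rewards given by `ridxT`, pure observation
uniform on `T`. -/
noncomputable def modelT (T : Finset (Fin N)) (π : JointDec n q) :
    LBObs N → ℝ :=
  fun o => if o.1 = ridxT N n q Φ₁ Φ₂ T π ∧ o.2 ∈ T then ((T.card : ℝ))⁻¹ else 0

/-- The model `M_{T,0}`: rewards of `M₀` (as if `B* = ∅`), pure observation
uniform on `T`. -/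
noncomputable def modelT0 (T : Finset (Fin N)) (π : JointDec n q) :
    LBObs N → ℝ :=
  fun o => if o.1 = ridx0 n q π ∧ o.2 ∈ T then ((T.card : ℝ))⁻¹ else 0

/-- The model `M₀`: rewards as if `B* = ∅`, pure observation uniform on `[N]`. -/
noncomputable def model0 (π : JointDec n q) : LBObs N → ℝ :=
  fun o => if o.1 = ridx0 n q π then ((N : ℝ))⁻¹ else 0

/-- Expected reward `f^M_k` of player `k ∈ {0,1}` (zero-sum: `f₂ = −f₁`) under a
kernel `M` at the pure decision `π`. -/
noncomputable def fLB (M : JointDec n q → LBObs N → ℝ) (k : Fin 2)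
    (π : JointDec n q) : ℝ :=
  ∑ o, M π o * (if k = 0 then rdecode o.1 else -rdecode o.1)

/-- The Nash gap `h^M(π) = Σ_{k=1,2} (max_{π'_k} f^M_k(π'_k, π_{−k}) − f^M_k(π))`. -/
noncomputable def gapLB (M : JointDec n q → LBObs N → ℝ) (π : JointDec n q) : ℝ :=
  ((⨆ a : Fin (2 * n), fLB N n q M 0 (a, π.2)) - fLB N n q M 0 π)
    + ((⨆ b : Fin (2 * q + 1), fLB N n q M 1 (π.1, b)) - fLB N n q M 1 π)

/-- The index set `𝒯₁ ∪ 𝒯₂` of the model class. -/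
abbrev TIdx (N : ℕ) := {T : Finset (Fin N) // T.card = N / 3 ∨ T.card = 2 * N / 3}

/-- The mixture model `Σ_T ν(T) · M_T` determined by `ν ∈ Δ(𝒯₁ ∪ 𝒯₂)`; the
elements of `co(M)` are exactly those mixtures. -/
noncomputable def mixT (ν : TIdx N → ℝ) (π : JointDec n q) : LBObs N → ℝ :=
  fun o => ∑ T : TIdx N, ν T * modelT N n q Φ₁ Φ₂ T.1 π o

/-- Squared Hellinger distance (`H² ∈ [0,2]` normalization). -/
noncomputable def hellSq {X : Type} [Fintype X] (p q : X → ℝ) : ℝ :=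
  ∑ x, (Real.sqrt (p x) - Real.sqrt (q x)) ^ 2

/-- The offset DEC of the convexified lower-bound instance,
`decoreg_γ(co(J)) = sup_{M̄ ∈ co(M)} inf_{p ∈ Δ(Π)} sup_{M ∈ co(M)}
  E_{π∼p}[ h^M(π) − γ·H²(M(π), M̄(π)) ]`. -/
noncomputable def decoregLB (γ : ℝ) : ℝ :=
  ⨆ νb : {v : TIdx N → ℝ // v ∈ stdSimplex ℝ (TIdx N)},
    ⨅ p : {p : JointDec n q → ℝ // p ∈ stdSimplex ℝ (JointDec n q)},
      ⨆ ν : {v : TIdx N → ℝ // v ∈ stdSimplex ℝ (TIdx N)},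
        ∑ π, p.1 π *
          (gapLB N n q (mixT N n q Φ₁ Φ₂ ν.1) π
            - γ * hellSq (mixT N n q Φ₁ Φ₂ ν.1 π) (mixT N n q Φ₁ Φ₂ νb.1 π))

/-- **Condition 1** (minimum distance): within each family `𝒯_i`, codewords of
distinct sets differ in at least `q − N + 1` of their `n` coordinates. -/
def Condition1 : Prop :=
  (∀ T T' : Finset (Fin N), T.card = N / 3 → T'.card = N / 3 → T ≠ T' →
    q - N + 1 ≤ (Finset.univ.filter fun i : Fin n => Φ₁ T i ≠ Φ₁ T' i).card) ∧
  (∀ T T' : Finset (Fin N), T.card = 2 * N / 3 → T'.card = 2 * N / 3 → T ≠ T' →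
    q - N + 1 ≤ (Finset.univ.filter fun i : Fin n => Φ₂ T i ≠ Φ₂ T' i).card)

/-- **Condition 2** (near-uniformity of codeword symbols conditioned on any small
set `Q` being contained in `T`): `P_{T ∼ Unif(𝒯_i)}(Φ(T)(a₁) = a₂ | Q ⊆ T) ≤ 2/q`
(stated in cross-multiplied form). -/
def Condition2 : Prop :=
  (∀ Q : Finset (Fin N), (Q.card : ℝ) ≤ Real.sqrt N →
    ∀ (a₁ : Fin n) (a₂ : Fin q),
      ((Finset.univ.filter fun T : Finset (Fin N) =>
          T.card = N / 3 ∧ Q ⊆ T ∧ Φ₁ T a₁ = a₂).card : ℝ) ≤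
        (2 / (q : ℝ)) *
          ((Finset.univ.filter fun T : Finset (Fin N) =>
            T.card = N / 3 ∧ Q ⊆ T).card : ℝ)) ∧
  (∀ Q : Finset (Fin N), (Q.card : ℝ) ≤ Real.sqrt N →
    ∀ (a₁ : Fin n) (a₂ : Fin q),
      ((Finset.univ.filter fun T : Finset (Fin N) =>
          T.card = 2 * N / 3 ∧ Q ⊆ T ∧ Φ₂ T a₁ = a₂).card : ℝ) ≤
        (2 / (q : ℝ)) *
          ((Finset.univ.filter fun T : Finset (Fin N) =>
            T.card = 2 * N / 3 ∧ Q ⊆ T).card : ℝ))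

end TwoPlayerLB

section Algorithms

/-- An algorithm interacting for `T₀` rounds with decision set `P` and
observation set `O`: at round `t` it plays a randomized decision depending on
the history of the first `t` rounds, and after `T₀` rounds it outputs a
randomized decision. -/
structure LBAlg (P O : Type) (T₀ : ℕ) where
  dec : (t : ℕ) → (Fin t → P × O) → P → ℝ
  out : (Fin T₀ → P × O) → P → ℝ

/-- The randomization at every round, and for the output, is a valid probability
distribution. -/
def LBAlg.Valid {P O : Type} [Fintype P] {T₀ : ℕ} (alg : LBAlg P O T₀) : Prop :=
  (∀ (t : ℕ) (h : Fin t → P × O), alg.dec t h ∈ stdSimplex ℝ P) ∧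
  (∀ h : Fin T₀ → P × O, alg.out h ∈ stdSimplex ℝ P)

/-- Probability that the interaction of the algorithm `alg` with the true model
(kernel) `M` produces exactly the `T₀`-round history `h`. -/
noncomputable def algProbHist {P O : Type} [Fintype P] [Fintype O] {T₀ : ℕ}
    (alg : LBAlg P O T₀) (M : P → O → ℝ) (h : Fin T₀ → P × O) : ℝ :=
  ∏ t : Fin T₀,
    alg.dec t.1 (fun s => h ⟨s.1, s.2.trans t.2⟩) (h t).1 * M (h t).1 (h t).2

/-- Probability, under the interaction of `alg` with the model `M`, of an event
`E` over `T₀`-round histories. -/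
noncomputable def algProbEvent {P O : Type} [Fintype P] [Fintype O] {T₀ : ℕ}
    (alg : LBAlg P O T₀) (M : P → O → ℝ) (E : Set (Fin T₀ → P × O)) : ℝ :=
  ∑ h : Fin T₀ → P × O, if h ∈ E then algProbHist alg M h else 0

/-- Probability, under the interaction of `alg` with the model `M`, that the
output decision `π̂` lies in `E ⊆ P`. -/
noncomputable def algProbOut {P O : Type} [Fintype P] [Fintype O] {T₀ : ℕ}
    (alg : LBAlg P O T₀) (M : P → O → ℝ) (E : Set P) : ℝ :=
  ∑ h : Fin T₀ → P × O, algProbHist alg M h *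
    ∑ p : P, if p ∈ E then alg.out h p else 0

/-- Expectation, under the interaction of `alg` with the model `M`, of a function
`φ` of the output decision `π̂`. -/
noncomputable def algExpOut {P O : Type} [Fintype P] [Fintype O] {T₀ : ℕ}
    (alg : LBAlg P O T₀) (M : P → O → ℝ) (φ : P → ℝ) : ℝ :=
  ∑ h : Fin T₀ → P × O, algProbHist alg M h * ∑ p : P, alg.out h p * φ p

end Algorithms

/-! Fix the reference mixture `M̄ = Σ νb(T) M_T`. At the safe action `π₂ = 0` every model pays `0`
and reveals only `o∘`, so against the strategy "player 1 uniform on a block `B`, player 2 plays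
`0`" a mixture `ν` gains at most `δ` times the fraction of dangerous `a ∈ B` (where some `b` hits
`B*` with `ν`-probability `≥ 1/(1+δ)`), and pays `γ` times the Hellinger distance of the laws of
`o∘`. A dangerous decision fixes a codeword symbol with probability `≥ 1000/1001`; as distinct
codewords agree in fewer than `N` places (Condition 1), more than `2N` dangerous decisions in a
block force an atom of `ν` of mass `≥ 997/1001`, so that `o∘` is then nearly uniform on that atom.
Sets of the two families have sizes `N/3` and `2N/3`, so their uniform laws are Hellinger-far.
Hence either the danger rate is at most `2N/n = ε`, or the penalty `γ/100 ≥ 2.25` beats the gain.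
-/

section Hellinger

variable {X : Type} [Fintype X]

lemma hellSq_nonneg (p p' : X → ℝ) : 0 ≤ hellSq p p' :=
  Finset.sum_nonneg fun _ _ => sq_nonneg _

lemma hellSq_comm (p p' : X → ℝ) : hellSq p p' = hellSq p' p := by
  simp only [hellSq, ← neg_sub (√(p' _)), neg_sq]

lemma hellSq_self (p : X → ℝ) : hellSq p p = 0 := by
  simp [hellSq]

lemma sqrt_hellSq_eq_dist (p p' : X → ℝ) :
    √(hellSq p p') = dist (WithLp.toLp 2 fun x => √(p x) : EuclideanSpace ℝ X)
      (WithLp.toLp 2 fun x => √(p' x)) := by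
  simp [EuclideanSpace.dist_eq, hellSq, Real.dist_eq, sq_abs]

lemma sq_le_hellSq_of_far {f g u v : X → ℝ} {a b c : ℝ} (ha : 0 ≤ a) (hb : 0 ≤ b) (hc : 0 ≤ c)
    (hfu : hellSq f u ≤ a ^ 2) (hgv : hellSq g v ≤ b ^ 2) (huv : (a + b + c) ^ 2 ≤ hellSq u v) :
    c ^ 2 ≤ hellSq f g := by
  have hfu' : √(hellSq u f) ≤ a := by rw [hellSq_comm, Real.sqrt_le_left ha]; exact hfu
  have hgv' : √(hellSq g v) ≤ b := (Real.sqrt_le_left hb).2 hgv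
  have huv' : a + b + c ≤ √(hellSq u v) :=
    (Real.le_sqrt (by positivity) (hellSq_nonneg u v)).2 huv
  have htri := dist_triangle4 (WithLp.toLp 2 fun x => √(u x) : EuclideanSpace ℝ X)
    (WithLp.toLp 2 fun x => √(f x)) (WithLp.toLp 2 fun x => √(g x)) (WithLp.toLp 2 fun x => √(v x))
  simp only [← sqrt_hellSq_eq_dist] at htri
  exact (Real.le_sqrt hc (hellSq_nonneg f g)).1 (by linarith)

lemma sq_sqrt_sub_sqrt_le_abs_sub {a b : ℝ} (ha : 0 ≤ a) (hb : 0 ≤ b) :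
    (√a - √b) ^ 2 ≤ |a - b| := by
  wlog hba : b ≤ a generalizing a b
  · rw [← neg_sub, neg_sq, abs_sub_comm]; exact this hb ha (le_of_not_ge hba)
  rw [abs_of_nonneg (sub_nonneg.2 hba)]
  have := Real.sqrt_le_sqrt hba
  nlinarith [Real.sq_sqrt ha, Real.sq_sqrt hb, Real.sqrt_nonneg b]

lemma hellSq_le_sum_abs_sub {p p' : X → ℝ} (hp : ∀ x, 0 ≤ p x) (hp' : ∀ x, 0 ≤ p' x) :
    hellSq p p' ≤ ∑ x, |p x - p' x| :=
  Finset.sum_le_sum fun x _ => sq_sqrt_sub_sqrt_le_abs_sub (hp x) (hp' x)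

lemma sum_abs_sub_le_two {p p' : X → ℝ} (hp : p ∈ stdSimplex ℝ X) (hp' : p' ∈ stdSimplex ℝ X) :
    ∑ x, |p x - p' x| ≤ 2 := by
  calc ∑ x, |p x - p' x| ≤ ∑ x, (p x + p' x) := Finset.sum_le_sum fun x _ => by
        rw [abs_le]; constructor <;> linarith [hp.1 x, hp'.1 x]
    _ = 2 := by rw [Finset.sum_add_distrib, hp.2, hp'.2]; norm_num

lemma hellSq_mixture_le {ι : Type*} [Fintype ι] [DecidableEq ι] {P : ι → X → ℝ}
    (hP : ∀ i, P i ∈ stdSimplex ℝ X) {ν : ι → ℝ} (hν : ν ∈ stdSimplex ℝ ι) (i₀ : ι) :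
    hellSq (fun x => ∑ i, ν i * P i x) (P i₀) ≤ 2 * (1 - ν i₀) := by
  have hmix : ∀ x, ∑ i, ν i * P i x - P i₀ x = ∑ i, ν i * (P i x - P i₀ x) := fun x => by
    simp only [mul_sub, Finset.sum_sub_distrib, ← Finset.sum_mul, hν.2, one_mul]
  calc hellSq (fun x => ∑ i, ν i * P i x) (P i₀)
      ≤ ∑ x, |∑ i, ν i * P i x - P i₀ x| := hellSq_le_sum_abs_sub
        (fun x => Finset.sum_nonneg fun i _ => mul_nonneg (hν.1 i) ((hP i).1 x)) (hP i₀).1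
    _ ≤ ∑ x, ∑ i, ν i * |P i x - P i₀ x| := Finset.sum_le_sum fun x _ => by
        rw [hmix]
        refine (Finset.abs_sum_le_sum_abs _ _).trans_eq (Finset.sum_congr rfl fun i _ => ?_)
        rw [abs_mul, abs_of_nonneg (hν.1 i)]
    _ = ∑ i ∈ Finset.univ.erase i₀, ν i * ∑ x, |P i x - P i₀ x| := by
        simp only [Finset.mul_sum]
        rw [Finset.sum_comm, Finset.sum_erase (a := i₀) _ (by simp)]
    _ ≤ ∑ i ∈ Finset.univ.erase i₀, ν i * 2 := Finset.sum_le_sum fun i _ =>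
        mul_le_mul_of_nonneg_left (sum_abs_sub_le_two (hP i) (hP i₀)) (hν.1 i)
    _ = 2 * (1 - ν i₀) := by
        rw [← Finset.sum_mul, Finset.sum_erase_eq_sub (Finset.mem_univ _), hν.2]; ring

lemma hellSq_eq_two_sub {p p' : X → ℝ} (hp : p ∈ stdSimplex ℝ X) (hp' : p' ∈ stdSimplex ℝ X) :
    hellSq p p' = 2 - 2 * ∑ x, √(p x) * √(p' x) := by
  have hterm : ∀ x, (√(p x) - √(p' x)) ^ 2 = p x + p' x - 2 * (√(p x) * √(p' x)) := fun x => by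
    rw [sub_sq, Real.sq_sqrt (hp.1 x), Real.sq_sqrt (hp'.1 x)]; ring
  simp only [hellSq, hterm, Finset.sum_sub_distrib, Finset.sum_add_distrib, hp.2, hp'.2,
    ← Finset.mul_sum]
  norm_num

end Hellinger

section Uniform

variable {X : Type} [Fintype X] [DecidableEq X]

noncomputable def unifVec (S : Finset X) : X → ℝ :=
  fun x => if x ∈ S then (#S : ℝ)⁻¹ else 0

lemma sum_unifVec_mul (S : Finset X) (g : X → ℝ) :
    ∑ x, unifVec S x * g x = (#S : ℝ)⁻¹ * ∑ x ∈ S, g x := by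
  simp only [unifVec, ite_mul, zero_mul, Finset.sum_ite_mem, Finset.univ_inter, Finset.mul_sum]

lemma unifVec_mem_stdSimplex {S : Finset X} (hS : S.Nonempty) : unifVec S ∈ stdSimplex ℝ X := by
  refine ⟨fun x => by unfold unifVec; positivity, ?_⟩
  simpa [hS.ne_empty] using sum_unifVec_mul S 1

lemma two_sub_two_mul_sqrt_le_hellSq_unifVec {S S' : Finset X} (hS : S.Nonempty)
    (hS' : S'.Nonempty) : 2 - 2 * √(#S / #S') ≤ hellSq (unifVec S) (unifVec S') := by
  rw [hellSq_eq_two_sub (unifVec_mem_stdSimplex hS) (unifVec_mem_stdSimplex hS')]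
  have hterm : ∀ x, √(unifVec S x) * √(unifVec S' x)
      ≤ unifVec S x * (√(#S) * (√(#S' : ℝ))⁻¹) := fun x => by
    unfold unifVec
    split_ifs with hx hx'
    · rw [Real.sqrt_inv, Real.sqrt_inv]
      have : (0 : ℝ) < √(#S) := Real.sqrt_pos.2 (by exact_mod_cast hS.card_pos)
      field_simp
      rw [Real.sq_sqrt (Nat.cast_nonneg _)]
    · rw [Real.sqrt_zero, mul_zero]; positivity
    all_goals simp
  have hsum : ∑ x, unifVec S x * (√(#S) * (√(#S' : ℝ))⁻¹) = √(#S / #S') := by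
    rw [sum_unifVec_mul, Finset.sum_const, nsmul_eq_mul, Real.sqrt_div (Nat.cast_nonneg _)]
    have : (0 : ℝ) < #S := by exact_mod_cast hS.card_pos
    field_simp
  linarith [Finset.sum_le_sum fun x (_ : x ∈ Finset.univ) => hterm x]

end Uniform

section Pairing

variable {J X : Type} [Fintype J] [Fintype X] [DecidableEq J]

noncomputable def pairWith (j : J) (p : X → ℝ) : J × X → ℝ :=
  fun o => if o.1 = j then p o.2 else 0

lemma hellSq_pairWith (j : J) (p p' : X → ℝ) :
    hellSq (pairWith j p) (pairWith j p') = hellSq p p' := by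
  simp only [hellSq, pairWith, Fintype.sum_prod_type]
  rw [Finset.sum_eq_single j (fun j' _ hj' => by simp [hj']) (by simp)]
  simp

lemma sum_pairWith_mul (j : J) (p : X → ℝ) (g : J → ℝ) :
    ∑ o, pairWith j p o * g o.1 = (∑ x, p x) * g j := by
  simp only [pairWith, Fintype.sum_prod_type]
  rw [Finset.sum_eq_single j (fun j' _ hj' => by simp [hj']) (by simp)]
  simp [Finset.sum_mul]

end Pairing

section Codes

variable {ι κ α : Type*} [DecidableEq α] (c : ι → κ → α)

lemma sum_mul_card_disagree_le [Fintype ι] {ν : ι → ℝ} (hν : ν ∈ stdSimplex ℝ ι) {η : ℝ}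
    {D : Finset κ} (β : κ → α) (hβ : ∀ k ∈ D, 1 - η ≤ ∑ T with c T k = β k, ν T) :
    ∑ T, ν T * #{k ∈ D | c T k ≠ β k} ≤ η * #D := by
  have hk : ∀ k, ∑ T, ν T * (if c T k ≠ β k then 1 else 0)
      = 1 - ∑ T with c T k = β k, ν T := fun k => by
    have := Finset.sum_filter_add_sum_filter_not Finset.univ (fun T => c T k = β k) ν
    rw [hν.2] at this
    simp only [mul_ite, mul_one, mul_zero, ← Finset.sum_filter]
    linarith
  calc ∑ T, ν T * #{k ∈ D | c T k ≠ β k}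
      = ∑ k ∈ D, ∑ T, ν T * (if c T k ≠ β k then 1 else 0) := by
        simp only [← Finset.sum_boole, Finset.mul_sum]
        exact Finset.sum_comm
    _ ≤ ∑ k ∈ D, η := Finset.sum_le_sum fun k hkD => by linarith [hk k, hβ k hkD]
    _ = η * #D := by rw [Finset.sum_const, nsmul_eq_mul, mul_comm]

lemma card_le_card_disagree_add [Fintype κ] (D : Finset κ) (β : κ → α) (T T' : ι) :
    #D ≤ #{k ∈ D | c T k ≠ β k} + #{k ∈ D | c T' k ≠ β k} + #{k | c T k = c T' k} := by
  refine (Finset.card_le_card fun k hk => ?_).trans ((Finset.card_union_le _ _).trans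
    (Nat.add_le_add_right (Finset.card_union_le _ _) _))
  simp only [Finset.mem_union, Finset.mem_filter, Finset.mem_univ, true_and]
  by_cases h : c T k = β k ∧ c T' k = β k
  · exact Or.inr (h.1.trans h.2.symm)
  · tauto

/-- By Markov, with probability `≥ 1 - 4η` a codeword agrees with `β` on more than `3/4` of `D`,
and two such codewords would agree on more than half of `D`. -/
lemma exists_heavy_codeword [Fintype ι] [Fintype κ] {A : ℕ}
    (hagree : ∀ T T', T ≠ T' → #{k | c T k = c T' k} ≤ A)
    {ν : ι → ℝ} (hν : ν ∈ stdSimplex ℝ ι) {η : ℝ} (hη : 4 * η < 1) {D : Finset κ}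
    (hD : 2 * A < #D) (β : κ → α) (hβ : ∀ k ∈ D, 1 - η ≤ ∑ T with c T k = β k, ν T) :
    ∃ T, 1 - 4 * η ≤ ν T ∧ 4 * #{k ∈ D | c T k ≠ β k} < #D := by
  set good : Finset ι := {T | 4 * #{k ∈ D | c T k ≠ β k} < #D}
  have hDpos : (0 : ℝ) < #D := by exact_mod_cast (Nat.zero_le _).trans_lt hD
  have hbad : ∑ T with T ∉ good, ν T * #D ≤ 4 * (η * #D) := by
    calc ∑ T with T ∉ good, ν T * #D ≤ ∑ T with T ∉ good, 4 * (ν T * #{k ∈ D | c T k ≠ β k}) :=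
          Finset.sum_le_sum fun T hT => by
            have : (#D : ℝ) ≤ 4 * #{k ∈ D | c T k ≠ β k} := by
              simp only [good, Finset.mem_filter, Finset.mem_univ, true_and, not_lt] at hT
              exact_mod_cast hT
            nlinarith [hν.1 T]
      _ ≤ 4 * ∑ T, ν T * #{k ∈ D | c T k ≠ β k} := by
          rw [← Finset.mul_sum]
          exact mul_le_mul_of_nonneg_left (Finset.sum_le_sum_of_subset_of_nonneg
            (Finset.filter_subset _ _) fun T _ _ => mul_nonneg (hν.1 T) (Nat.cast_nonneg _))
            (by norm_num)
      _ ≤ 4 * (η * #D) := by linarith [sum_mul_card_disagree_le c hν β hβ]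
  have hgood : 1 - 4 * η ≤ ∑ T ∈ good, ν T := by
    rw [← Finset.sum_mul] at hbad
    have := Finset.sum_filter_add_sum_filter_not Finset.univ (· ∈ good) ν
    rw [Finset.filter_mem_eq_inter, Finset.univ_inter, hν.2] at this
    nlinarith
  obtain ⟨T₀, hT₀⟩ : good.Nonempty :=
    Finset.nonempty_of_sum_ne_zero (by linarith : ∑ T ∈ good, ν T ≠ 0)
  have huniq : ∀ T ∈ good, T = T₀ := fun T hT => by
    by_contra hne
    simp only [good, Finset.mem_filter, Finset.mem_univ, true_and] at hT hT₀
    have := card_le_card_disagree_add c D β T T₀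
    have := hagree T T₀ hne
    omega
  refine ⟨T₀, ?_, by simpa [good] using hT₀⟩
  rwa [Finset.sum_eq_single_of_mem T₀ hT₀ fun T hT hne => absurd (huniq T hT) hne] at hgood

end Codes

lemma iInf_le_of_le_of_nonneg {ι : Sort*} {f : ι → ℝ} {a : ℝ} (ha : 0 ≤ a) (i : ι)
    (h : f i ≤ a) : ⨅ i, f i ≤ a := by
  by_cases hf : BddBelow (Set.range f)
  · exact ciInf_le_of_le hf i h
  · rwa [Real.iInf_of_not_bddBelow hf]

section Construction

variable {N n q : ℕ} (Φ₁ Φ₂ : Finset (Fin N) → Fin n → Fin q)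

lemma TIdx.nonempty (hN : 3 ≤ N) (T : TIdx N) : T.1.Nonempty := by
  rw [← Finset.card_pos]; rcases T.2 with h | h <;> omega

def family (T : Finset (Fin N)) : Fin 2 := if #T = N / 3 then 0 else 1

/-- `blockEmb n j i = i + n * j`: block `0` is `[1, n]` and block `1` is `[n + 1, 2n]` in the
paper's numbering of `Π₁`. -/
def blockEmb (n : ℕ) (j : Fin 2) : Fin n ↪ Fin (2 * n) :=
  (Function.Embedding.sectR j (Fin n)).trans finProdFinEquiv.toEmbedding

def block (n : ℕ) (j : Fin 2) : Finset (Fin (2 * n)) := univ.map (blockEmb n j)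

lemma card_block (j : Fin 2) : #(block n j) = n := by simp [block]

lemma blockEmb_inj {j j' : Fin 2} {i i' : Fin n} :
    blockEmb n j i = blockEmb n j' i' ↔ j = j' ∧ i = i' := by
  simp [blockEmb, Prod.ext_iff]

/-- `B*(T)` is the graph of `Φ(T)`, placed in the block of `Π₁` belonging to the family of `T`. -/
def codeword (T : Finset (Fin N)) (i : Fin n) : JointDec n q :=
  (blockEmb n (family T) i,
    if #T = N / 3 then ⟨Φ₁ T i + 1, by omega⟩ else ⟨q + 1 + Φ₂ T i, by omega⟩)

lemma inBstar_iff (T : Finset (Fin N)) (π : JointDec n q) :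
    inBstar N n q Φ₁ Φ₂ T π ↔ ∃ i, codeword Φ₁ Φ₂ T i = π := by
  unfold inBstar codeword family
  split_ifs <;> simp [blockEmb, Prod.ext_iff, Fin.ext_iff, eq_comm, add_comm]

lemma inBstar_blockEmb_iff (T : Finset (Fin N)) (j : Fin 2) (k : Fin n) (b : Fin (2 * q + 1)) :
    inBstar N n q Φ₁ Φ₂ T (blockEmb n j k, b) ↔ codeword Φ₁ Φ₂ T k = (blockEmb n j k, b) := by
  refine (inBstar_iff Φ₁ Φ₂ T _).trans ⟨fun ⟨i, hi⟩ => ?_, fun h => ⟨k, h⟩⟩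
  obtain ⟨-, rfl⟩ := blockEmb_inj.1 (congrArg Prod.fst hi)
  exact hi

lemma card_eq_lt_of_le_card_ne (hq : q = n) {f g : Fin n → Fin q}
    (h : q - N + 1 ≤ #{i | f i ≠ g i}) : #{i | f i = g i} < N := by
  have := Finset.card_filter_add_card_filter_not (s := univ) fun i => f i = g i
  simp only [Finset.card_univ, Fintype.card_fin] at this
  simp only [ne_eq] at h
  omega

lemma card_codeword_agree_lt (hq : q = n) (hcond : Condition1 N n q Φ₁ Φ₂) {T T' : TIdx N}
    (hne : T ≠ T') : #{i | codeword Φ₁ Φ₂ T.1 i = codeword Φ₁ Φ₂ T'.1 i} < N := by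
  have hne' : T.1 ≠ T'.1 := fun h => hne (Subtype.ext h)
  by_cases hT : #T.1 = N / 3 <;> by_cases hT' : #T'.1 = N / 3
  · convert card_eq_lt_of_le_card_ne hq (hcond.1 T T' hT hT' hne') using 3
    simp [codeword, family, hT, hT', Fin.ext_iff]
  · have : #{i | codeword Φ₁ Φ₂ T.1 i = codeword Φ₁ Φ₂ T'.1 i} = 0 := by
      simp [codeword, family, hT, hT', Prod.ext_iff, blockEmb_inj]
    rcases T'.2 with h | h <;> omega
  · have : #{i | codeword Φ₁ Φ₂ T.1 i = codeword Φ₁ Φ₂ T'.1 i} = 0 := by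
      simp [codeword, family, hT, hT', Prod.ext_iff, blockEmb_inj]
    rcases T.2 with h | h <;> omega
  · convert card_eq_lt_of_le_card_ne hq
      (hcond.2 T T' (T.2.resolve_left hT) (T'.2.resolve_left hT') hne') using 3
    simp [codeword, family, hT, hT', Fin.ext_iff]

/-- Player 2 gains by deviating from `(a, 0)` to some `(a, b)` iff `b` hits `B*` with probability
at least `1 / (1 + δ)`. -/
def IsDangerous (ν : TIdx N → ℝ) (a : Fin (2 * n)) : Prop :=
  ∃ b : Fin (2 * q + 1), b ≠ 0 ∧ 1000 / 1001 ≤ ∑ T with inBstar N n q Φ₁ Φ₂ T.1 (a, b), ν T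

lemma card_dangerous_block_le_or_heavy (hq : q = n) (hcond : Condition1 N n q Φ₁ Φ₂)
    {ν : TIdx N → ℝ} (hν : ν ∈ stdSimplex ℝ (TIdx N)) (j : Fin 2) :
    #{a ∈ block n j | IsDangerous Φ₁ Φ₂ ν a} ≤ 2 * N ∨
      ∃ T : TIdx N, family T.1 = j ∧ 997 / 1001 ≤ ν T := by
  rw [block, Finset.filter_map, Finset.card_map]
  refine or_iff_not_imp_left.2 fun hD => ?_
  set D : Finset (Fin n) := {k | IsDangerous Φ₁ Φ₂ ν (blockEmb n j k)}
  have hdanger : ∀ k ∈ D, ∃ b : Fin (2 * q + 1), b ≠ 0 ∧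
      1000 / 1001 ≤ ∑ T with inBstar N n q Φ₁ Φ₂ T.1 (blockEmb n j k, b), ν T :=
    fun k hk => (Finset.mem_filter.1 hk).2
  choose! b hb using hdanger
  obtain ⟨T, hT, hmost⟩ := exists_heavy_codeword (fun T : TIdx N => codeword Φ₁ Φ₂ T.1)
    (fun T T' hne => (card_codeword_agree_lt Φ₁ Φ₂ hq hcond hne).le) hν (η := 1 / 1001)
    (by norm_num) (D := D) (by simp only [D]; exact not_le.1 hD)
    (fun k => (blockEmb n j k, b k)) fun k hk => by
      simp_rw [← inBstar_blockEmb_iff]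
      linarith [(hb k hk).2]
  refine ⟨T, ?_, by linarith⟩
  obtain ⟨k, -, hk⟩ : ∃ k ∈ D, codeword Φ₁ Φ₂ T.1 k = (blockEmb n j k, b k) := by
    by_contra! h
    rw [Finset.filter_true_of_mem h] at hmost
    omega
  exact (blockEmb_inj.1 (congrArg Prod.fst hk)).1

lemma card_dangerous_le_or_heavy (hq : q = n) (hcond : Condition1 N n q Φ₁ Φ₂)
    {ν : TIdx N → ℝ} (hν : ν ∈ stdSimplex ℝ (TIdx N)) :
    #{a | IsDangerous Φ₁ Φ₂ ν a} ≤ 4 * N ∨ ∃ T : TIdx N, 997 / 1001 ≤ ν T := by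
  have hsplit : #{a | IsDangerous Φ₁ Φ₂ ν a}
      ≤ #{a ∈ block n 0 | IsDangerous Φ₁ Φ₂ ν a} + #{a ∈ block n 1 | IsDangerous Φ₁ Φ₂ ν a} := by
    refine (Finset.card_le_card fun a ha => ?_).trans (Finset.card_union_le _ _)
    obtain ⟨⟨j, k⟩, rfl⟩ := finProdFinEquiv.surjective a
    fin_cases j <;> simp_all [block, blockEmb]
  rcases card_dangerous_block_le_or_heavy Φ₁ Φ₂ hq hcond hν 0 with h₀ | ⟨T, -, hT⟩
  · rcases card_dangerous_block_le_or_heavy Φ₁ Φ₂ hq hcond hν 1 with h₁ | ⟨T, -, hT⟩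
    · left; omega
    · exact Or.inr ⟨T, hT⟩
  · exact Or.inr ⟨T, hT⟩

lemma fLB_one (M : JointDec n q → LBObs N → ℝ) (π : JointDec n q) :
    fLB N n q M 1 π = -fLB N n q M 0 π := by
  simp [fLB]

lemma modelT_eq_pairWith (T : Finset (Fin N)) (π : JointDec n q) :
    modelT N n q Φ₁ Φ₂ T π = pairWith (ridxT N n q Φ₁ Φ₂ T π) (unifVec T) := by
  ext o
  simp only [modelT, pairWith, unifVec, ite_and]

lemma fLB_mixT (hN : 3 ≤ N) (ν : TIdx N → ℝ) (π : JointDec n q) :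
    fLB N n q (mixT N n q Φ₁ Φ₂ ν) 0 π = ∑ T, ν T * rdecode (ridxT N n q Φ₁ Φ₂ T.1 π) := by
  simp only [fLB, mixT, if_pos, Finset.sum_mul, mul_assoc]
  rw [Finset.sum_comm]
  refine Finset.sum_congr rfl fun T _ => ?_
  rw [← Finset.mul_sum, modelT_eq_pairWith, sum_pairWith_mul,
    (unifVec_mem_stdSimplex (TIdx.nonempty hN T)).2, one_mul]

lemma fLB_mixT_apply_snd_zero (hN : 3 ≤ N) (ν : TIdx N → ℝ) (a : Fin (2 * n)) :
    fLB N n q (mixT N n q Φ₁ Φ₂ ν) 0 (a, 0) = 0 := by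
  simp [fLB_mixT Φ₁ Φ₂ hN, ridxT, rdecode]

lemma fLB_mixT_of_snd_ne_zero (hN : 3 ≤ N) {ν : TIdx N → ℝ} (hν : ν ∈ stdSimplex ℝ (TIdx N))
    (a : Fin (2 * n)) {b : Fin (2 * q + 1)} (hb : b ≠ 0) :
    fLB N n q (mixT N n q Φ₁ Φ₂ ν) 0 (a, b)
      = 1 - (1 + 1 / 1000) * ∑ T with inBstar N n q Φ₁ Φ₂ T.1 (a, b), ν T := by
  have hb' : (b : ℕ) ≠ 0 := fun h => hb (Fin.ext h)
  have hT : ∀ T : TIdx N, ν T * rdecode (ridxT N n q Φ₁ Φ₂ T.1 (a, b))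
      = ν T - (1 + 1 / 1000) * if inBstar N n q Φ₁ Φ₂ T.1 (a, b) then ν T else 0 := fun T => by
    by_cases h : inBstar N n q Φ₁ Φ₂ T.1 (a, b)
    · simp [ridxT, hb', h, rdecode]; ring
    · simp [ridxT, hb', h, rdecode]
  rw [fLB_mixT Φ₁ Φ₂ hN, Finset.sum_congr rfl fun T _ => hT T, Finset.sum_sub_distrib, hν.2,
    ← Finset.mul_sum, Finset.sum_filter]

lemma gapLB_mixT_apply_snd_zero_le (hN : 3 ≤ N) {ν : TIdx N → ℝ} (hν : ν ∈ stdSimplex ℝ (TIdx N))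
    (a : Fin (2 * n)) :
    gapLB N n q (mixT N n q Φ₁ Φ₂ ν) (a, 0) ≤ if IsDangerous Φ₁ Φ₂ ν a then 1 / 1000 else 0 := by
  simp only [gapLB, fLB_one, fLB_mixT_apply_snd_zero Φ₁ Φ₂ hN, Real.iSup_const_zero, neg_zero,
    sub_zero, zero_add]
  refine ciSup_le fun b => ?_
  rcases eq_or_ne b 0 with rfl | hb
  · rw [fLB_mixT_apply_snd_zero Φ₁ Φ₂ hN, neg_zero]
    split_ifs <;> norm_num
  rw [fLB_mixT_of_snd_ne_zero Φ₁ Φ₂ hN hν a hb, neg_sub]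
  split_ifs with hd
  · have : ∑ T with inBstar N n q Φ₁ Φ₂ T.1 (a, b), ν T ≤ 1 :=
      hν.2 ▸ Finset.sum_le_sum_of_subset_of_nonneg (Finset.filter_subset _ _)
        fun T _ _ => hν.1 T
    linarith
  · have : ∑ T with inBstar N n q Φ₁ Φ₂ T.1 (a, b), ν T < 1000 / 1001 :=
      not_le.1 fun h => hd ⟨b, hb, h⟩
    linarith

/-- The law of the pure observation `o∘` under the mixture `Σ_T ν(T) M_T`. -/
noncomputable def obsMix (ν : TIdx N → ℝ) : Fin N → ℝ := fun x => ∑ T, ν T * unifVec T.1 x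

lemma mixT_apply_snd_zero (ν : TIdx N → ℝ) (a : Fin (2 * n)) :
    mixT N n q Φ₁ Φ₂ ν (a, 0) = pairWith 0 (obsMix ν) := by
  ext o
  simp only [mixT, modelT_eq_pairWith, ridxT, Fin.val_zero, if_pos, pairWith, obsMix]
  split_ifs <;> simp

lemma hellSq_obsMix_le (hN : 3 ≤ N) {ν : TIdx N → ℝ} (hν : ν ∈ stdSimplex ℝ (TIdx N))
    (T : TIdx N) : hellSq (obsMix ν) (unifVec T.1) ≤ 2 * (1 - ν T) :=
  hellSq_mixture_le (fun T => unifVec_mem_stdSimplex (TIdx.nonempty hN T)) hν T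

lemma half_le_hellSq_unifVec_of_family_ne (hN : 3 ≤ N) {T T' : TIdx N}
    (h : family T.1 ≠ family T'.1) : 1 / 2 ≤ hellSq (unifVec T.1) (unifVec T'.1) := by
  wlog hT : #T.1 = N / 3 generalizing T T'
  · rw [hellSq_comm]
    refine this (Ne.symm h) ?_
    by_contra hT'
    exact h (by simp [family, hT, hT'])
  have hT' : #T'.1 = 2 * N / 3 := T'.2.resolve_left fun hT' => h (by simp [family, hT, hT'])
  have hratio : (#T.1 : ℝ) / #T'.1 ≤ (3 / 4) ^ 2 := by
    rw [div_le_iff₀ (by exact_mod_cast (TIdx.nonempty hN T').card_pos)]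
    have : 2 * #T.1 ≤ #T'.1 := by omega
    have : (2 * #T.1 : ℝ) ≤ #T'.1 := by exact_mod_cast this
    linarith
  have := two_sub_two_mul_sqrt_le_hellSq_unifVec (TIdx.nonempty hN T) (TIdx.nonempty hN T')
  linarith [(Real.sqrt_le_left (by norm_num)).2 hratio]

lemma payoff_unifVec_block_le (hN : 3 ≤ N) {γ : ℝ} (B : Finset (Fin (2 * n))) (hB : B.Nonempty)
    {ν νb : TIdx N → ℝ} (hν : ν ∈ stdSimplex ℝ (TIdx N)) :
    ∑ π, unifVec (B ×ˢ {0}) π * (gapLB N n q (mixT N n q Φ₁ Φ₂ ν) π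
        - γ * hellSq (mixT N n q Φ₁ Φ₂ ν π) (mixT N n q Φ₁ Φ₂ νb π))
      ≤ #{a ∈ B | IsDangerous Φ₁ Φ₂ ν a} / #B / 1000 - γ * hellSq (obsMix ν) (obsMix νb) := by
  have hBpos : (0 : ℝ) < #B := by exact_mod_cast hB.card_pos
  have hgap : ∑ a ∈ B, gapLB N n q (mixT N n q Φ₁ Φ₂ ν) (a, 0)
      ≤ #{a ∈ B | IsDangerous Φ₁ Φ₂ ν a} / 1000 := by
    refine (Finset.sum_le_sum fun a _ => gapLB_mixT_apply_snd_zero_le Φ₁ Φ₂ hN hν a).trans_eq ?_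
    rw [← Finset.sum_filter, Finset.sum_const, nsmul_eq_mul]
    ring
  simp only [sum_unifVec_mul, Finset.sum_product, Finset.sum_singleton, Finset.card_product,
    Finset.card_singleton, mul_one, mixT_apply_snd_zero, hellSq_pairWith, Finset.sum_sub_distrib,
    Finset.sum_const, nsmul_eq_mul]
  calc (#B : ℝ)⁻¹ * (∑ a ∈ B, gapLB N n q (mixT N n q Φ₁ Φ₂ ν) (a, 0)
        - #B * (γ * hellSq (obsMix ν) (obsMix νb)))
      = (∑ a ∈ B, gapLB N n q (mixT N n q Φ₁ Φ₂ ν) (a, 0)) / #B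
        - γ * hellSq (obsMix ν) (obsMix νb) := by field_simp
    _ ≤ _ := by rw [div_right_comm]; gcongr

lemma decoregLB_le_of_forall_exists_block (hN : 3 ≤ N) {ε γ : ℝ} (hε : 0 ≤ ε) (hγ : 225 ≤ γ)
    (h : ∀ νb ∈ stdSimplex ℝ (TIdx N), ∃ B : Finset (Fin (2 * n)), B.Nonempty ∧
      ∀ ν ∈ stdSimplex ℝ (TIdx N), (#{a ∈ B | IsDangerous Φ₁ Φ₂ ν a} : ℝ) ≤ ε * #B ∨
        1 / 100 ≤ hellSq (obsMix ν) (obsMix νb)) :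
    decoregLB N n q Φ₁ Φ₂ γ ≤ ε := by
  refine Real.iSup_le (fun νb => ?_) hε
  obtain ⟨B, hB, hBν⟩ := h νb.1 νb.2
  refine iInf_le_of_le_of_nonneg hε
    ⟨_, unifVec_mem_stdSimplex (hB.product (Finset.singleton_nonempty 0))⟩
    (Real.iSup_le (fun ν => ?_) hε)
  refine (payoff_unifVec_block_le Φ₁ Φ₂ hN B hB ν.2).trans ?_
  have hBpos : (0 : ℝ) < #B := by exact_mod_cast hB.card_pos
  have hH := hellSq_nonneg (obsMix ν.1) (obsMix νb.1)
  rcases hBν ν.1 ν.2 with hd | hfar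
  · have : (#{a ∈ B | IsDangerous Φ₁ Φ₂ ν.1 a} : ℝ) / #B ≤ ε := (div_le_iff₀ hBpos).2 hd
    nlinarith
  · have : (#{a ∈ B | IsDangerous Φ₁ Φ₂ ν.1 a} : ℝ) / #B ≤ 1 :=
      (div_le_one hBpos).2 (by exact_mod_cast Finset.card_filter_le _ _)
    nlinarith

/-- If `obsMix νb` is close to some `unifVec Tb`, player 1 stays in the block of the other family:
a `ν` with many dangerous decisions there has an atom of that family, whose observations are far
from those of `Tb`. Otherwise player 1 may use all of `Π₁`. -/
lemma exists_block_few_dangerous_or_far (hN : 3 ≤ N) (hn : 0 < n) (hq : q = n)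
    (hcond : Condition1 N n q Φ₁ Φ₂) (νb : TIdx N → ℝ) :
    ∃ B : Finset (Fin (2 * n)), B.Nonempty ∧ ∀ ν ∈ stdSimplex ℝ (TIdx N),
      #{a ∈ B | IsDangerous Φ₁ Φ₂ ν a} * n ≤ 2 * N * #B ∨
        1 / 100 ≤ hellSq (obsMix ν) (obsMix νb) := by
  by_cases hclose : ∃ Tb : TIdx N, hellSq (obsMix νb) (unifVec Tb.1) < 1 / 25
  · obtain ⟨Tb, hTb⟩ := hclose
    obtain ⟨j, hj⟩ := exists_ne (family Tb.1)
    refine ⟨block n j, by rw [← Finset.card_pos, card_block]; exact hn, fun ν hν => ?_⟩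
    rcases card_dangerous_block_le_or_heavy Φ₁ Φ₂ hq hcond hν j with hd | ⟨Ts, hTs, hmass⟩
    · left
      rw [card_block]
      exact Nat.mul_le_mul_right n hd
    · right
      have := sq_le_hellSq_of_far (f := obsMix ν) (g := obsMix νb) (u := unifVec Ts.1)
        (v := unifVec Tb.1) (a := 1 / 10) (b := 1 / 5) (c := 1 / 10) (by norm_num)
        (by norm_num) (by norm_num) (by linarith [hellSq_obsMix_le hN hν Ts]) (by linarith)
        (by linarith [half_le_hellSq_unifVec_of_family_ne hN (hTs ▸ hj)])
      linarith
  · push Not at hclose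
    refine ⟨univ, Finset.univ_nonempty_iff.2 ⟨⟨0, by omega⟩⟩, fun ν hν => ?_⟩
    rcases card_dangerous_le_or_heavy Φ₁ Φ₂ hq hcond hν with hd | ⟨Ts, hmass⟩
    · left
      rw [Finset.card_univ, Fintype.card_fin]
      nlinarith
    · right
      have := sq_le_hellSq_of_far (f := obsMix ν) (g := obsMix νb) (u := unifVec Ts.1)
        (v := obsMix νb) (a := 1 / 10) (b := 0) (c := 1 / 10)
        (by norm_num) le_rfl (by norm_num) (by linarith [hellSq_obsMix_le hN hν Ts])
        (by rw [hellSq_self]; norm_num) (by rw [hellSq_comm]; linarith [hclose Ts])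
      linarith

end Construction

theorem decoregLB_le_eps_general (N n q : ℕ) (hN : 0 < N) (hN3 : N % 3 = 0)
    (ε : ℝ) (hε0 : 0 < ε)
    (hnval : (n : ℝ) = 2 * N / ε) (hq : q = n)
    (Φ₁ Φ₂ : Finset (Fin N) → Fin n → Fin q)
    (hcond1 : Condition1 N n q Φ₁ Φ₂)
    (γ : ℝ) (hγ : 225 ≤ γ) :
    decoregLB N n q Φ₁ Φ₂ γ ≤ ε := by
  have hN' : 3 ≤ N := by omega
  have hεn : ε * n = 2 * N := by rw [hnval]; field_simp
  have hnR : (0 : ℝ) < n := by rw [hnval]; positivity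
  refine decoregLB_le_of_forall_exists_block Φ₁ Φ₂ hN' hε0.le hγ fun νb _ => ?_
  obtain ⟨B, hB, hBν⟩ :=
    exists_block_few_dangerous_or_far Φ₁ Φ₂ hN' (Nat.cast_pos.1 hnR) hq hcond1 νb
  refine ⟨B, hB, fun ν hν => (hBν ν hν).imp_left fun hd => ?_⟩
  refine le_of_mul_le_mul_right ?_ hnR
  calc _ ≤ (2 * N * #B : ℝ) := by exact_mod_cast hd
    _ = ε * #B * n := by rw [← hεn]; ring

/-- Lemma: DEC upper bound for the lower-bound construction:
in the two-player construction with `n = q = 2N/ε` and `Φ` satisfying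
Condition 1, for every `γ ≥ 225`, `decoreg_γ(co(J)) ≤ ε`. -/
theorem decoregLB_le_eps (N n q : ℕ) (hN : 0 < N) (hN3 : N % 3 = 0) (hn : 0 < n)
    (ε : ℝ) (hε0 : 0 < ε) (hε1 : ε < 1)
    (hnval : (n : ℝ) = 2 * N / ε) (hq : q = n)
    (Φ₁ Φ₂ : Finset (Fin N) → Fin n → Fin q)
    (hcond1 : Condition1 N n q Φ₁ Φ₂)
    (γ : ℝ) (hγ : 225 ≤ γ) :
    decoregLB N n q Φ₁ Φ₂ γ ≤ ε :=
  decoregLB_le_eps_general N n q hN hN3 ε hε0 hnval hq Φ₁ Φ₂ hcond1 γ hγ
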